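/- arXiv:2602.01692 — 6 statements merged into one kernel-verified Lean document; each statement's English description precedes it below -/
import Mathlib

section
/- Let \(\mathcal{F}\) be an \(\ell\)-shifted intersecting family of k-element subsets of [n], and let \(\mathcal{G} = \{A \cap [\ell] : A \in \mathcal{F}\}\). Then \(\mathcal{G}\) is upward closed among subsets of \([\ell]\) of size at most k: if \(A \in \mathcal{G}\), \(A \subseteq B \subseteq [\ell]\), and \(|B| \le k\), then \(B \in \mathcal{G}\). -/
open Finset

/-- The (i,j)-shift of a single set with respect to a family. -/
def shiftSet (F : Finset (Finset ℕ)) (i j : ℕ) (A : Finset ℕ) : Finset ℕ :=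
  if i ∈ A ∧ j ∉ A ∧ (insert j A).erase i ∉ F then (insert j A).erase i else A

/-- The (i,j)-shift of a family. -/
def shiftFam (F : Finset (Finset ℕ)) (i j : ℕ) : Finset (Finset ℕ) :=
  F.image (shiftSet F i j)

/-- A family is intersecting if any two members meet. -/
def IntersectingFam (F : Finset (Finset ℕ)) : Prop :=
  ∀ A ∈ F, ∀ B ∈ F, (A ∩ B).Nonempty

/-- A family is t-intersecting if any two members share at least t elements. -/
def TIntersecting (t : ℕ) (F : Finset (Finset ℕ)) : Prop :=
  ∀ A ∈ F, ∀ B ∈ F, t ≤ (A ∩ B).card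

/-- A family on [n] is ℓ-shifted if it is invariant under all (i,j)-shifts with
    i ∈ [n] \ [ℓ] and j ∈ [ℓ]. -/
def IsShifted (ℓ n : ℕ) (F : Finset (Finset ℕ)) : Prop :=
  ∀ i ∈ Icc 1 n, ∀ j ∈ Icc 1 ℓ, i ∉ Icc 1 ℓ → shiftFam F i j = F

/-- The degree of an element in a family. -/
def deg (F : Finset (Finset ℕ)) (i : ℕ) : ℕ := (F.filter (fun A => i ∈ A)).card

/-! Moving an element `j ∈ [ℓ]` into a member `A` of an ℓ-shifted family, in exchange for an
element of `A` outside `[ℓ]`, stays inside the family and enlarges the trace `A ∩ [ℓ]` by `j`.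
Repeating this one element of `B \ (A ∩ [ℓ])` at a time reaches a member with trace `B`; an element
outside `[ℓ]` is available as long as the trace has fewer than `k = |A|` elements. -/

lemma erase_insert_mem_of_shiftFam_eq {F : Finset (Finset ℕ)} {i j : ℕ} (hsh : shiftFam F i j = F)
    {A : Finset ℕ} (hA : A ∈ F) (hiA : i ∈ A) (hjA : j ∉ A) : (insert j A).erase i ∈ F := by
  by_contra hnot
  have hshift : shiftSet F i j A ∈ shiftFam F i j := mem_image_of_mem _ hA
  rw [hsh, shiftSet, if_pos ⟨hiA, hjA, hnot⟩] at hshift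
  exact hnot hshift

lemma erase_insert_inter_of_mem_of_notMem {A S : Finset ℕ} {i j : ℕ} (hj : j ∈ S) (hi : i ∉ S) :
    (insert j A).erase i ∩ S = insert j (A ∩ S) := by
  ext x
  simp only [mem_inter, mem_erase, mem_insert]
  grind

lemma IsShifted.exists_mem_inter_eq_insert {ℓ n : ℕ} {F : Finset (Finset ℕ)}
    (hsh : IsShifted ℓ n F) {A : Finset ℕ} (hA : A ∈ F) (hAn : A ⊆ Icc 1 n)
    (hlt : (A ∩ Icc 1 ℓ).card < A.card) {j : ℕ} (hj : j ∈ Icc 1 ℓ) (hjA : j ∉ A) :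
    ∃ A' ∈ F, A' ∩ Icc 1 ℓ = insert j (A ∩ Icc 1 ℓ) := by
  obtain ⟨i, hiA, hiℓ⟩ : ∃ i ∈ A, i ∉ Icc 1 ℓ := by
    by_contra! hsub
    rw [inter_eq_left.mpr hsub] at hlt
    exact lt_irrefl _ hlt
  exact ⟨_, erase_insert_mem_of_shiftFam_eq (hsh i (hAn hiA) j hj hiℓ) hA hiA hjA,
    erase_insert_inter_of_mem_of_notMem hj hiℓ⟩

lemma IsShifted.exists_mem_inter_eq_union {ℓ n k : ℕ} {F : Finset (Finset ℕ)}
    (hsh : IsShifted ℓ n F) (hF : ∀ A ∈ F, A ⊆ Icc 1 n) (hunif : ∀ A ∈ F, A.card = k)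
    {D : Finset ℕ} (hD : D ⊆ Icc 1 ℓ) {A : Finset ℕ} (hA : A ∈ F)
    (hk : (A ∩ Icc 1 ℓ ∪ D).card ≤ k) :
    ∃ C ∈ F, C ∩ Icc 1 ℓ = A ∩ Icc 1 ℓ ∪ D := by
  induction D using Finset.induction_on generalizing A with
  | empty => exact ⟨A, hA, (union_empty _).symm⟩
  | insert b D _ ih =>
    have hb : b ∈ Icc 1 ℓ := hD (mem_insert_self b D)
    have hDℓ : D ⊆ Icc 1 ℓ := (subset_insert b D).trans hD
    rw [union_insert] at hk ⊢
    by_cases hbA : b ∈ A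
    · rw [insert_eq_of_mem (mem_union_left D (mem_inter.mpr ⟨hbA, hb⟩))] at hk ⊢
      exact ih hDℓ hA hk
    · have hlt : (A ∩ Icc 1 ℓ).card < A.card := by
        have hbT : b ∉ A ∩ Icc 1 ℓ := fun h => hbA (mem_inter.mp h).1
        calc (A ∩ Icc 1 ℓ).card < (insert b (A ∩ Icc 1 ℓ)).card := by
              rw [card_insert_of_notMem hbT]; omega
          _ ≤ (insert b (A ∩ Icc 1 ℓ ∪ D)).card :=
              card_le_card (insert_subset_insert b subset_union_left)
          _ ≤ A.card := hunif A hA ▸ hk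
      obtain ⟨A', hA', hA'ℓ⟩ := hsh.exists_mem_inter_eq_insert hA (hF A hA) hlt hb hbA
      rw [← insert_union, ← hA'ℓ] at hk ⊢
      exact ih hDℓ hA' hk

theorem stmt4_general (n k ℓ : ℕ) (F : Finset (Finset ℕ))
    (hF : ∀ A ∈ F, A ⊆ Icc 1 n) (hunif : ∀ A ∈ F, A.card = k)
    (hsh : IsShifted ℓ n F)
    (G : Finset (Finset ℕ)) (hG : G = F.image (fun A => A ∩ Icc 1 ℓ)) :
    ∀ A ∈ G, ∀ B : Finset ℕ, A ⊆ B → B ⊆ Icc 1 ℓ → B.card ≤ k → B ∈ G := by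
  subst hG
  rintro _ hA B hAB hBℓ hBk
  obtain ⟨A, hAF, rfl⟩ := mem_image.mp hA
  rw [← union_sdiff_of_subset hAB] at hBk ⊢
  obtain ⟨C, hCF, hC⟩ :=
    hsh.exists_mem_inter_eq_union hF hunif (sdiff_subset.trans hBℓ) hAF hBk
  exact mem_image.mpr ⟨C, hCF, hC⟩

theorem stmt4 (n k ℓ : ℕ) (F : Finset (Finset ℕ))
    (hF : ∀ A ∈ F, A ⊆ Icc 1 n) (hunif : ∀ A ∈ F, A.card = k)
    (hsh : IsShifted ℓ n F) (hint : IntersectingFam F)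
    (G : Finset (Finset ℕ)) (hG : G = F.image (fun A => A ∩ Icc 1 ℓ)) :
    ∀ A ∈ G, ∀ B : Finset ℕ, A ⊆ B → B ⊆ Icc 1 ℓ → B.card ≤ k → B ∈ G :=
  stmt4_general n k ℓ F hF hunif hsh G hG
end

section
/- Let \(n > 2k\) and let \(\mathcal{G}\) be a (not necessarily uniform) intersecting family of subsets of [n], assuming the Huang–Zhao minimum-degree theorem (every k-uniform intersecting family on [n] with n > 2k has some element of degree at most \(\binom{n-2}{k-2}\)). Then there exists an element \(i \in [n]\) such that for every \(m \le k\), the number of m-element sets of \(\mathcal{G}\) containing i is at most \(\binom{n-2}{m-2}\). -/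
open Finset

/-!
Let `H` be the family of `k`-subsets of `[n]` containing a member of `G`; it is `k`-uniform and
intersecting, so Huang–Zhao gives an `i` of degree at most `C(n-2, k-2)` in `H`. If more than
`C(n-2, m-2)` of the `m`-sets of `G` contained `i` (`2 ≤ m ≤ k`), the complements of their links
at `i` inside `[n] ∖ {i}` would be more than `C(n-2, n-m)` sets of size `n-m` on `n-1` points.
The colex initial segment of that size already contains a set through the last point, so by
Kruskal–Katona their `(k-m)`-fold shadow has more than `C(n-2, n-k)` members; complemented back,
these are distinct members of `H` through `i`, a contradiction. For `m ≤ 1` only `{i}` counts.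
-/

open scoped FinsetFamily

section Colex

open Finset.Colex

variable {α : Type*} [LinearOrder α] {𝒞 : Finset (Finset α)} {r : ℕ}

lemma Finset.Colex.IsInitSeg.iterate_shadow [Finite α] (h : IsInitSeg 𝒞 r) (j : ℕ) :
    IsInitSeg (∂^[j] 𝒞) (r - j) := by
  induction j with
  | zero => simpa
  | succ j ih =>
    rw [Function.iterate_succ_apply', Nat.sub_succ]
    exact ih.shadow

lemma Finset.Colex.IsInitSeg.powersetCard_Iio_subset [LocallyFiniteOrderBot α]
    (h : IsInitSeg 𝒞 r) {Z : Finset α} (hZ : Z ∈ 𝒞) {a z : α} (hz : z ∈ Z)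
    (haz : a ≤ z) : powersetCard r (Iio a) ⊆ 𝒞 := by
  intro t ht
  rw [mem_powersetCard] at ht
  have hlt : ∀ b ∈ t, b < z := fun b hb => (mem_Iio.1 (ht.1 hb)).trans_le haz
  have hzt : z ∉ t := fun hzt => (hlt z hzt).false
  exact h.2 hZ
    ⟨toColex_lt_toColex_iff_exists_forall_lt.2 ⟨z, hz, hzt, fun b hb _ => hlt b hb⟩, ht.2⟩

variable [Fintype α] [LocallyFiniteOrderBot α]

/-- The witness is the colex-least `r`-set leaving `Iio a`: everything colex-below it lies in
`Iio a`. -/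
lemma Finset.Colex.exists_card_initSeg_le {𝒜 : Finset (Finset α)}
    (h𝒜 : (𝒜 : Set (Finset α)).Sized r) {a : α} (hcard : (#(Iio a)).choose r < #𝒜) :
    ∃ Y : Finset α, #Y = r ∧ ¬ Y ⊆ Iio a ∧ #(initSeg Y) ≤ #𝒜 := by
  set 𝒩 := (powersetCard r univ).filter (fun Y => ¬ Y ⊆ Iio a)
  have h𝒩 : 𝒩.Nonempty := by
    have h𝒜a : ¬ 𝒜 ⊆ powersetCard r (Iio a) := fun h => hcard.not_ge <| by
      simpa using card_le_card h
    obtain ⟨A, hA, hAa⟩ := not_subset.1 h𝒜a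
    rw [mem_powersetCard, h𝒜 hA] at hAa
    refine ⟨A, mem_filter.2 ⟨mem_powersetCard.2 ⟨subset_univ A, h𝒜 hA⟩, ?_⟩⟩
    simpa using hAa
  obtain ⟨Y, hY, hYmin⟩ := exists_min_image 𝒩 toColex h𝒩
  simp only [𝒩, mem_filter, mem_powersetCard] at hY hYmin
  refine ⟨Y, hY.1.2, hY.2, ?_⟩
  have hsub : initSeg Y ⊆ insert Y (powersetCard r (Iio a)) := by
    intro t ht
    rw [mem_initSeg] at ht
    rw [mem_insert, mem_powersetCard]
    by_cases hta : t ⊆ Iio a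
    · exact Or.inr ⟨hta, ht.1 ▸ hY.1.2⟩
    · exact Or.inl <| toColex_inj.1 <|
        ht.2.antisymm (hYmin t ⟨⟨subset_univ t, ht.1 ▸ hY.1.2⟩, hta⟩)
  calc #(initSeg Y) ≤ #(powersetCard r (Iio a)) + 1 :=
        (card_le_card hsub).trans (card_insert_le _ _)
    _ ≤ #𝒜 := by rw [card_powersetCard]; exact hcard

theorem Finset.choose_lt_card_iterate_shadow {N r j : ℕ} {𝒜 : Finset (Finset (Fin N))}
    (h𝒜 : (𝒜 : Set (Finset (Fin N))).Sized r) (hj : j < r) (a : Fin N)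
    (hcard : (a : ℕ).choose r < #𝒜) : (a : ℕ).choose (r - j) < #(∂^[j] 𝒜) := by
  rw [← Fin.card_Iio] at hcard ⊢
  obtain ⟨Y, hYr, hYa, hY𝒜⟩ := exists_card_initSeg_le h𝒜 hcard
  obtain ⟨y, hyY, hya⟩ := not_subset.1 hYa
  obtain ⟨Z, hyZ, hZY, hZ⟩ := exists_subsuperset_card_eq (singleton_subset_iff.2 hyY)
    (n := r - j) (by simp; omega) (by omega)
  have hZmem : Z ∈ ∂^[j] (initSeg Y) := mem_shadow_iterate_iff_exists_sdiff.2
    ⟨Y, mem_initSeg_self, hZY, by rw [card_sdiff_of_subset hZY]; omega⟩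
  have hseg : IsInitSeg (∂^[j] (initSeg Y)) (r - j) := hYr ▸ isInitSeg_initSeg.iterate_shadow j
  have hsub : insert Z (powersetCard (r - j) (Iio a)) ⊆ ∂^[j] (initSeg Y) :=
    insert_subset hZmem <| hseg.powersetCard_Iio_subset hZmem (singleton_subset_iff.1 hyZ)
      (not_lt.1 fun h => hya (mem_Iio.2 h))
  have hZa : Z ∉ powersetCard (r - j) (Iio a) := fun h =>
    hya ((mem_powersetCard.1 h).1 (singleton_subset_iff.1 hyZ))
  calc (#(Iio a)).choose (r - j) < #(insert Z (powersetCard (r - j) (Iio a))) := by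
        rw [card_insert_of_notMem hZa, card_powersetCard]; omega
    _ ≤ #(∂^[j] (initSeg Y)) := card_le_card hsub
    _ ≤ #(∂^[j] 𝒜) := iterated_kk h𝒜 hY𝒜 (hYr ▸ isInitSeg_initSeg)

end Colex

section StarOfCompl

variable {α : Type*} {N : ℕ} {e : Fin N ↪ α} {i : α}

lemma Finset.notMem_map_of_forall_ne (hi : ∀ x, e x ≠ i) (D : Finset (Fin N)) :
    i ∉ D.map e := by
  simpa using fun x _ => hi x

variable [DecidableEq α]

-- Members of the star at `i` correspond to their link complements in `Fin N`, with inclusion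
-- reversed, so upper shadows inside the star become shadows.
variable (e i) in
def starOfCompl (D : Finset (Fin N)) : Finset α := insert i ((Dᶜ).map e)

lemma mem_starOfCompl_self (D : Finset (Fin N)) : i ∈ starOfCompl e i D := mem_insert_self _ _

lemma starOfCompl_subset (D : Finset (Fin N)) : starOfCompl e i D ⊆ insert i (univ.map e) :=
  insert_subset_insert _ (map_subset_map.2 (subset_univ _))

lemma starOfCompl_anti {D D' : Finset (Fin N)} (h : D ⊆ D') :
    starOfCompl e i D' ⊆ starOfCompl e i D :=
  insert_subset_insert _ (map_subset_map.2 (compl_subset_compl.2 h))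

lemma starOfCompl_injective (hi : ∀ x, e x ≠ i) : Function.Injective (starOfCompl e i) := by
  intro D D' h
  have := congrArg (·.erase i) h
  simp only [starOfCompl, erase_insert (notMem_map_of_forall_ne hi _)] at this
  exact compl_injective (map_injective e this)

lemma card_starOfCompl (hi : ∀ x, e x ≠ i) (D : Finset (Fin N)) :
    #(starOfCompl e i D) = N - #D + 1 := by
  rw [starOfCompl, card_insert_of_notMem (notMem_map_of_forall_ne hi _), card_map, card_compl,
    Fintype.card_fin]

lemma exists_starOfCompl_eq {A : Finset α} (hiA : i ∈ A) (hA : A ⊆ insert i (univ.map e)) :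
    ∃ D, starOfCompl e i D = A := by
  refine ⟨univ.filter (fun x => e x ∉ A), ?_⟩
  ext y
  simp only [starOfCompl, mem_insert, mem_map, compl_filter, not_not, mem_filter, mem_univ,
    true_and]
  constructor
  · rintro (rfl | ⟨x, hx, rfl⟩)
    exacts [hiA, hx]
  · intro hy
    obtain rfl | hy' := mem_insert.1 (hA hy)
    · exact Or.inl rfl
    · obtain ⟨x, -, rfl⟩ := mem_map.1 hy'
      exact Or.inr ⟨x, hy, rfl⟩

end StarOfCompl

section UpLevel

variable {α : Type*} [DecidableEq α]

def upLevel (V : Finset α) (k : ℕ) (G : Finset (Finset α)) : Finset (Finset α) :=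
  (powersetCard k V).filter (fun B => ∃ A ∈ G, A ⊆ B)

lemma mem_upLevel {V B : Finset α} {k : ℕ} {G : Finset (Finset α)} :
    B ∈ upLevel V k G ↔ (B ⊆ V ∧ #B = k) ∧ ∃ A ∈ G, A ⊆ B := by
  rw [upLevel, mem_filter, mem_powersetCard]

end UpLevel

lemma IntersectingFam.upLevel {G : Finset (Finset ℕ)} (hG : IntersectingFam G) (V : Finset ℕ)
    (k : ℕ) : IntersectingFam (upLevel V k G) := by
  intro B₁ hB₁ B₂ hB₂
  obtain ⟨A₁, hA₁, hAB₁⟩ := (mem_upLevel.1 hB₁).2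
  obtain ⟨A₂, hA₂, hAB₂⟩ := (mem_upLevel.1 hB₂).2
  exact (hG A₁ hA₁ A₂ hA₂).mono (inter_subset_inter hAB₁ hAB₂)

lemma Finset.exists_fin_embedding_map_univ_eq {α : Type*} (s : Finset α) :
    ∃ e : Fin #s ↪ α, univ.map e = s :=
  ⟨s.equivFin.symm.toEmbedding.trans (Function.Embedding.subtype _), by
    rw [← map_map, map_univ_equiv, univ_eq_attach, attach_map_val]⟩

theorem card_filter_mem_card_eq_le_choose {α : Type*} [DecidableEq α] {V : Finset α}
    {G : Finset (Finset α)} {i : α} {n k m : ℕ} (hV : #V = n) (hi : i ∈ V)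
    (hG : ∀ A ∈ G, A ⊆ V) (hm : 2 ≤ m) (hmk : m ≤ k) (hkn : k < n)
    (hdeg : #((upLevel V k G).filter (i ∈ ·)) ≤ (n - 2).choose (k - 2)) :
    #(G.filter (fun A => i ∈ A ∧ #A = m)) ≤ (n - 2).choose (m - 2) := by
  obtain ⟨e, he⟩ := exists_fin_embedding_map_univ_eq (V.erase i)
  have hN : #(V.erase i) = n - 1 := by rw [card_erase_of_mem hi, hV]
  have hei : ∀ x, e x ≠ i := fun x => ne_of_mem_erase (he ▸ mem_map_of_mem e (mem_univ x))
  have heV : insert i (univ.map e) = V := by rw [he, insert_erase hi]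
  have hcard (D : Finset (Fin #(V.erase i))) : #(starOfCompl e i D) + #D = n := by
    have hD := card_le_univ D
    rw [Fintype.card_fin] at hD
    rw [card_starOfCompl hei]
    omega
  set 𝒜 := univ.filter (fun D => starOfCompl e i D ∈ G ∧ #D = n - m)
  have h𝒜 : (𝒜 : Set (Finset (Fin #(V.erase i)))).Sized (n - m) :=
    fun D hD => (mem_filter.1 hD).2.2
  have hlink : #(G.filter (fun A => i ∈ A ∧ #A = m)) ≤ #𝒜 := by
    refine card_le_card_of_surjOn (starOfCompl e i) fun A hA => ?_
    obtain ⟨hAG, hiA, hAm⟩ := mem_filter.1 hA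
    obtain ⟨D, rfl⟩ := exists_starOfCompl_eq hiA (heV ▸ hG A hAG)
    have hDm := hcard D
    exact ⟨D, mem_filter.2 ⟨mem_univ D, hAG, by omega⟩, rfl⟩
  have hshadow : #(∂^[k - m] 𝒜) ≤ #((upLevel V k G).filter (i ∈ ·)) := by
    refine card_le_card_of_injOn (starOfCompl e i) (fun D hD => ?_)
      (starOfCompl_injective hei).injOn
    obtain ⟨E, hE, hDE, hED⟩ := mem_shadow_iterate_iff_exists_sdiff.1 hD
    obtain ⟨-, hEG, hEcard⟩ := mem_filter.1 hE
    have hEDcard := card_sdiff_add_card_eq_card hDE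
    have hDk := hcard D
    exact mem_filter.2 ⟨mem_upLevel.2 ⟨⟨(starOfCompl_subset D).trans heV.subset, by omega⟩,
      _, hEG, starOfCompl_anti hDE⟩, mem_starOfCompl_self D⟩
  by_contra! hlt
  have hKK := choose_lt_card_iterate_shadow h𝒜 (j := k - m) (by omega) ⟨n - 2, by omega⟩
    (by rw [Nat.choose_symm_of_eq_add (by omega : n - 2 = n - m + (m - 2))]; omega)
  rw [Nat.choose_symm_of_eq_add (by omega : n - 2 = n - m - (k - m) + (k - 2))] at hKK
  omega

lemma card_filter_mem_card_eq_le_one {α : Type*} [DecidableEq α] (G : Finset (Finset α)) (i : α)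
    {m : ℕ} (hm : m ≤ 1) : #(G.filter (fun A => i ∈ A ∧ #A = m)) ≤ 1 := by
  have hsingleton : ∀ A ∈ G.filter (fun A => i ∈ A ∧ #A = m), A = {i} := by
    intro A hA
    obtain ⟨-, hiA, hAm⟩ := mem_filter.1 hA
    exact eq_singleton_iff_unique_mem.2 ⟨hiA, fun b hb => card_le_one.1 (by omega) b hb i hiA⟩
  exact card_le_one.2 fun A hA B hB => (hsingleton A hA).trans (hsingleton B hB).symm

theorem stmt7 (n k : ℕ) (hnk : 2 * k < n)
    (G : Finset (Finset ℕ)) (hG : ∀ A ∈ G, A ⊆ Icc 1 n)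
    (hint : IntersectingFam G)
    (HZ : ∀ F : Finset (Finset ℕ), (∀ A ∈ F, A ⊆ Icc 1 n) →
      (∀ A ∈ F, A.card = k) → IntersectingFam F →
      ∃ i ∈ Icc 1 n, deg F i ≤ Nat.choose (n - 2) (k - 2)) :
    ∃ i ∈ Icc 1 n, ∀ m ≤ k,
      (G.filter (fun A => i ∈ A ∧ A.card = m)).card ≤ Nat.choose (n - 2) (m - 2) := by
  obtain ⟨i, hi, hdeg⟩ := HZ (upLevel (Icc 1 n) k G) (fun B hB => (mem_upLevel.1 hB).1.1)
    (fun B hB => (mem_upLevel.1 hB).1.2) (hint.upLevel _ k)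
  refine ⟨i, hi, fun m hmk => ?_⟩
  rcases le_or_gt m 1 with hm | hm
  · rw [show m - 2 = 0 by omega, Nat.choose_zero_right]
    exact card_filter_mem_card_eq_le_one G i hm
  · exact card_filter_mem_card_eq_le_choose (by simp) hi hG hm hmk (by omega) hdeg
end

section
/- Assuming the Huang–Zhao theorem (for n > 2k, every intersecting family \(\mathcal{F} \subseteq \binom{[n]}{k}\) has minimum degree at most \(\binom{n-2}{k-2}\)): for all \(n \ge 2k+1\) and every intersecting family \(\mathcal{F} \subseteq \binom{[n]}{k}\), there exist at least \(n - 2k\) elements \(i \in [n]\) with degree \(d_i(\mathcal{F}) \le \binom{n-2}{k-2}\); equivalently, the (2k+1)-th largest degree satisfies \(d_{2k+1}(\mathcal{F}) \le \binom{n-2}{k-2}\). -/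
open Finset

/-!
It suffices that every `(2k+1)`-set `B ⊆ [n]` contains an element of degree at most
`C(n-2, k-2)`. Shifting `F` towards `B` keeps it uniform and intersecting and does not lower the
degrees inside `B`; the limit family `G` is closed under such shifts, so together with a member
it contains every `k`-subset of `B` through that member's trace on `B`. Huang–Zhao, applied to
the members of `G` inside `B`, gives `j ∈ B` of small degree there. A member of `G` through `j`
is determined by its trace on `B`, of some size `s`, and `k - s` points outside `B`. Up-closure
forbids `s = 1`, and Kruskal–Katona bounds the number of traces of size `s` by `C(2k-1, s-2)`;
Vandermonde's identity sums the resulting bound to `C(n-2, k-2)`.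
-/

section Shifting

def ShiftMoves (F : Finset (Finset ℕ)) (i j : ℕ) (A : Finset ℕ) : Prop :=
  i ∈ A ∧ j ∉ A ∧ (insert j A).erase i ∉ F

variable {F : Finset (Finset ℕ)} {i j : ℕ} {A B : Finset ℕ}

lemma shiftSet_of_moves (h : ShiftMoves F i j A) : shiftSet F i j A = (insert j A).erase i := by
  unfold shiftSet
  exact if_pos h

lemma shiftSet_of_not_moves (h : ¬ShiftMoves F i j A) : shiftSet F i j A = A := by
  unfold shiftSet
  exact if_neg h

lemma ShiftMoves.mem_erase_insert (h : ShiftMoves F i j A) : j ∈ (insert j A).erase i :=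
  mem_erase.2 ⟨fun hij => h.2.1 (hij ▸ h.1), mem_insert_self _ _⟩

lemma card_shiftSet (F : Finset (Finset ℕ)) (i j : ℕ) (A : Finset ℕ) :
    #(shiftSet F i j A) = #A := by
  by_cases h : ShiftMoves F i j A
  · rw [shiftSet_of_moves h, card_erase_of_mem (mem_insert_of_mem h.1),
      card_insert_of_notMem h.2.1, Nat.add_sub_cancel]
  · rw [shiftSet_of_not_moves h]

lemma shiftSet_subset {X : Finset ℕ} (hA : A ⊆ X) (hj : j ∈ X) : shiftSet F i j A ⊆ X := by
  by_cases h : ShiftMoves F i j A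
  · rw [shiftSet_of_moves h]
    exact (erase_subset _ _).trans (insert_subset hj hA)
  · rwa [shiftSet_of_not_moves h]

lemma mem_shiftSet_of_ne {m : ℕ} (hm : m ∈ A) (hmi : m ≠ i) : m ∈ shiftSet F i j A := by
  by_cases h : ShiftMoves F i j A
  · rw [shiftSet_of_moves h]
    exact mem_erase.2 ⟨hmi, mem_insert_of_mem hm⟩
  · rwa [shiftSet_of_not_moves h]

lemma shiftSet_injOn (F : Finset (Finset ℕ)) (i j : ℕ) : Set.InjOn (shiftSet F i j) F := by
  intro A hA B hB hAB
  by_cases hmA : ShiftMoves F i j A <;>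
    by_cases hmB : ShiftMoves F i j B
  · -- a moved set is recovered by moving `j` back to `i`
    rw [shiftSet_of_moves hmA, shiftSet_of_moves hmB] at hAB
    have := congrArg (fun X => (insert i X).erase j) hAB
    simpa only [insert_erase (mem_insert_of_mem hmA.1), insert_erase (mem_insert_of_mem hmB.1),
      erase_insert hmA.2.1, erase_insert hmB.2.1] using this
  · rw [shiftSet_of_moves hmA, shiftSet_of_not_moves hmB] at hAB
    exact absurd (hAB ▸ hB) hmA.2.2
  · rw [shiftSet_of_not_moves hmA, shiftSet_of_moves hmB] at hAB
    exact absurd (hAB.symm ▸ hA) hmB.2.2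
  · rwa [shiftSet_of_not_moves hmA, shiftSet_of_not_moves hmB] at hAB

lemma deg_shiftFam (F : Finset (Finset ℕ)) (i j m : ℕ) :
    deg (shiftFam F i j) m = #{A ∈ F | m ∈ shiftSet F i j A} := by
  rw [deg, shiftFam, filter_image]
  exact card_image_of_injOn ((shiftSet_injOn F i j).mono (filter_subset _ _))

lemma deg_le_deg_shiftFam {m : ℕ} (hmi : m ≠ i) : deg F m ≤ deg (shiftFam F i j) m := by
  rw [deg_shiftFam]
  exact card_le_card fun A hA => by
    rw [mem_filter] at hA ⊢
    exact ⟨hA.1, mem_shiftSet_of_ne hA.2 hmi⟩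

lemma inter_nonempty_of_moves_of_not_moves (hF : IntersectingFam F) (hA : A ∈ F) (hB : B ∈ F)
    (hmA : ShiftMoves F i j A) (hmB : ¬ShiftMoves F i j B) :
    ((insert j A).erase i ∩ B).Nonempty := by
  by_cases hx : ∃ x ∈ A ∩ B, x ≠ i
  · obtain ⟨x, hx, hxi⟩ := hx
    exact ⟨x, mem_inter.2 ⟨mem_erase.2 ⟨hxi, mem_insert_of_mem (mem_inter.1 hx).1⟩,
      (mem_inter.1 hx).2⟩⟩
  push Not at hx
  have hiB : i ∈ B := by
    obtain ⟨x, hxAB⟩ := hF A hA B hB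
    exact hx x hxAB ▸ (mem_inter.1 hxAB).2
  by_cases hjB : j ∈ B
  · exact ⟨j, mem_inter.2 ⟨hmA.mem_erase_insert, hjB⟩⟩
  have hB' : (insert j B).erase i ∈ F := by
    by_contra h
    exact hmB ⟨hiB, hjB, h⟩
  obtain ⟨x, hx'⟩ := hF A hA _ hB'
  simp only [mem_inter, mem_erase, mem_insert] at hx'
  obtain ⟨hxA, hxi, rfl | hxB⟩ := hx'
  · exact absurd hxA hmA.2.1
  · exact absurd (hx x (mem_inter.2 ⟨hxA, hxB⟩)) hxi

lemma IntersectingFam.shiftFam (hF : IntersectingFam F) : IntersectingFam (shiftFam F i j) := by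
  intro X hX Y hY
  obtain ⟨A, hA, rfl⟩ := mem_image.1 hX
  obtain ⟨B, hB, rfl⟩ := mem_image.1 hY
  by_cases hmA : ShiftMoves F i j A <;>
    by_cases hmB : ShiftMoves F i j B
  · rw [shiftSet_of_moves hmA, shiftSet_of_moves hmB]
    exact ⟨j, mem_inter.2 ⟨hmA.mem_erase_insert, hmB.mem_erase_insert⟩⟩
  · rw [shiftSet_of_moves hmA, shiftSet_of_not_moves hmB]
    exact inter_nonempty_of_moves_of_not_moves hF hA hB hmA hmB
  · rw [shiftSet_of_not_moves hmA, shiftSet_of_moves hmB, inter_comm]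
    exact inter_nonempty_of_moves_of_not_moves hF hB hA hmB hmA
  · rw [shiftSet_of_not_moves hmA, shiftSet_of_not_moves hmB]
    exact hF A hA B hB

end Shifting

section ShiftClosure

variable {F G : Finset (Finset ℕ)} {A B X : Finset ℕ} {i j k : ℕ}

def ShiftClosedInto (B : Finset ℕ) (G : Finset (Finset ℕ)) : Prop :=
  ∀ A ∈ G, ∀ i ∈ A \ B, ∀ j ∈ B \ A, (insert j A).erase i ∈ G

lemma sdiff_shiftSet_subset (hj : j ∈ B) (A : Finset ℕ) : shiftSet F i j A \ B ⊆ A \ B := by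
  by_cases h : ShiftMoves F i j A
  · rw [shiftSet_of_moves h, erase_sdiff_comm, insert_sdiff_of_mem _ hj]
    exact erase_subset _ _
  · rw [shiftSet_of_not_moves h]

lemma sum_card_sdiff_shiftFam_lt (hi : i ∉ B) (hj : j ∈ B) (hA : A ∈ F)
    (hmA : ShiftMoves F i j A) :
    ∑ C ∈ shiftFam F i j, #(C \ B) < ∑ C ∈ F, #(C \ B) := by
  rw [shiftFam, sum_image (shiftSet_injOn F i j)]
  refine sum_lt_sum (fun C _ => card_le_card (sdiff_shiftSet_subset hj C)) ⟨A, hA, ?_⟩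
  refine card_lt_card ((ssubset_iff_of_subset (sdiff_shiftSet_subset hj A)).2
    ⟨i, mem_sdiff.2 ⟨hmA.1, hi⟩, fun h => ?_⟩)
  rw [shiftSet_of_moves hmA] at h
  exact (mem_erase.1 (mem_sdiff.1 h).1).1 rfl

lemma exists_shiftClosedInto (hB : B ⊆ X) (hF : ∀ A ∈ F, A ⊆ X) (hunif : ∀ A ∈ F, #A = k)
    (hint : IntersectingFam F) :
    ∃ G : Finset (Finset ℕ), (∀ A ∈ G, A ⊆ X) ∧ (∀ A ∈ G, #A = k) ∧ IntersectingFam G ∧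
      (∀ b ∈ B, deg F b ≤ deg G b) ∧ ShiftClosedInto B G := by
  induction hN : ∑ A ∈ F, #(A \ B) using Nat.strong_induction_on generalizing F with
  | _ N ih =>
  by_cases hcl : ShiftClosedInto B F
  · exact ⟨F, hF, hunif, hint, fun _ _ => le_rfl, hcl⟩
  simp only [ShiftClosedInto, not_forall] at hcl
  obtain ⟨A, hA, i, hi, j, hj, hmove⟩ := hcl
  rw [mem_sdiff] at hi hj
  obtain ⟨G, hGX, hGunif, hGint, hGdeg, hGcl⟩ := ih _
    (hN ▸ sum_card_sdiff_shiftFam_lt hi.2 hj.1 hA ⟨hi.1, hj.2, hmove⟩)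
    (forall_mem_image.2 fun A hA => shiftSet_subset (hF A hA) (hB hj.1))
    (forall_mem_image.2 fun A hA => (card_shiftSet F i j A).trans (hunif A hA))
    hint.shiftFam rfl
  refine ⟨G, hGX, hGunif, hGint, fun b hb => ?_, hGcl⟩
  exact (deg_le_deg_shiftFam (ne_of_mem_of_not_mem hb hi.2)).trans (hGdeg b hb)

lemma ShiftClosedInto.mem_of_inter_subset (hG : ShiftClosedInto B G) (hunif : ∀ A ∈ G, #A = k)
    {S : Finset ℕ} (hA : A ∈ G) (hAS : A ∩ B ⊆ S) (hSB : S ⊆ B) (hS : #S = k) : S ∈ G := by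
  induction hd : #(A \ B) generalizing A with
  | zero =>
    have hAB : A ⊆ B := sdiff_eq_empty_iff_subset.1 (card_eq_zero.1 hd)
    rw [inter_eq_left.2 hAB] at hAS
    rwa [← eq_of_subset_of_card_le hAS (by rw [hS, hunif A hA])]
  | succ d ih =>
    obtain ⟨i, hi⟩ := card_pos.1 (by omega : 0 < #(A \ B))
    have htrace : #(A ∩ B) < #S := by
      have := card_inter_add_card_sdiff A B
      rw [hunif A hA] at this
      omega
    obtain ⟨j, hjS, hjA⟩ := exists_mem_notMem_of_card_lt_card htrace
    have hjB : j ∈ B := hSB hjS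
    have hjA : j ∉ A := fun h => hjA (mem_inter.2 ⟨h, hjB⟩)
    refine ih (hG A hA i hi j (mem_sdiff.2 ⟨hjB, hjA⟩)) ?_ ?_
    · intro x hx
      obtain ⟨hx, hxB⟩ := mem_inter.1 hx
      rcases mem_insert.1 (mem_of_mem_erase hx) with rfl | hxA
      · exact hjS
      · exact hAS (mem_inter.2 ⟨hxA, hxB⟩)
    · rw [erase_sdiff_comm, insert_sdiff_of_mem _ hjB, card_erase_of_mem hi, hd, Nat.add_sub_cancel]

end ShiftClosure

section KruskalKatona

open Finset.Colex
open scoped FinsetFamily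

variable {m r a b i : ℕ}

/-- A strict Kruskal–Katona bound: the extremal family is that of the `r`-sets avoiding a point. -/
lemma choose_lt_card_shadow_iterate {𝒜 : Finset (Finset (Fin (m + 1)))} (hrm : r ≤ m)
    (hir : i < r) (h𝒜 : (𝒜 : Set (Finset (Fin (m + 1)))).Sized r) (hcard : m.choose r < #𝒜) :
    m.choose (r - i) < #(∂^[i] 𝒜) := by
  set top := Fin.last m
  set ℬ := powersetCard r (univ.erase top)
  have hne : ({S ∈ powersetCard r univ | top ∈ S} : Finset (Finset (Fin (m + 1)))).Nonempty := by
    obtain ⟨S, hS, -, hSr⟩ := exists_subsuperset_card_eq (n := r) (subset_univ {top})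
      (by rw [card_singleton]; omega) (by rw [card_univ, Fintype.card_fin]; omega)
    exact ⟨S, mem_filter.2 ⟨mem_powersetCard.2 ⟨subset_univ S, hSr⟩, singleton_subset_iff.1 hS⟩⟩
  obtain ⟨D, hD, hDmin⟩ := exists_min_image _ toColex hne
  rw [mem_filter, mem_powersetCard] at hD
  have hDℬ : D ∉ ℬ := fun h => (mem_erase.1 ((mem_powersetCard.1 h).1 hD.2)).1 rfl
  -- the `r`-sets avoiding `top`, followed by the colex-least `r`-set through `top`
  have hinit : IsInitSeg (insert D ℬ) r := by
    refine ⟨?_, fun s t hs ⟨hts, ht⟩ => ?_⟩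
    · intro s hs
      rcases mem_insert.1 hs with rfl | hs
      · exact hD.1.2
      · exact (mem_powersetCard.1 hs).2
    by_cases htop : top ∈ t
    · exfalso
      rcases mem_insert.1 hs with rfl | hs
      · exact (hDmin t (mem_filter.2 ⟨mem_powersetCard.2 ⟨subset_univ t, ht⟩, htop⟩)).not_gt hts
      · obtain ⟨c, hcs, -, hc⟩ := toColex_lt_toColex_iff_exists_forall_lt.1 hts
        have hs' : top ∉ s := fun h => (mem_erase.1 ((mem_powersetCard.1 hs).1 h)).1 rfl
        exact (hc top htop hs').not_ge (Fin.le_last c)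
    · exact mem_insert_of_mem (mem_powersetCard.2
        ⟨fun x hx => mem_erase.2 ⟨fun h => htop (h ▸ hx), mem_univ x⟩, ht⟩)
  obtain ⟨E, hE, hED, hEcard⟩ := exists_subsuperset_card_eq (n := r - i)
    (singleton_subset_iff.2 hD.2) (by rw [card_singleton]; omega) (by rw [hD.1.2]; omega)
  have hEℬ : E ∉ powersetCard (r - i) (univ.erase top) :=
    fun h => (mem_erase.1 ((mem_powersetCard.1 h).1 (singleton_subset_iff.1 hE))).1 rfl
  have hshadow : insert E (powersetCard (r - i) (univ.erase top)) ⊆ ∂^[i] (insert D ℬ) := by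
    intro T hT
    rw [mem_shadow_iterate_iff_exists_sdiff]
    rcases mem_insert.1 hT with rfl | hT
    · exact ⟨D, mem_insert_self _ _, hED, by rw [card_sdiff_of_subset hED, hD.1.2]; omega⟩
    obtain ⟨hTtop, hTcard⟩ := mem_powersetCard.1 hT
    obtain ⟨S, hTS, hStop, hScard⟩ := exists_subsuperset_card_eq (n := r) hTtop (by omega)
      (by rw [card_erase_of_mem (mem_univ _), card_univ, Fintype.card_fin]; omega)
    exact ⟨S, mem_insert_of_mem (mem_powersetCard.2 ⟨hStop, hScard⟩), hTS,
      by rw [card_sdiff_of_subset hTS]; omega⟩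
  calc m.choose (r - i) < #(insert E (powersetCard (r - i) (univ.erase top))) := by
        rw [card_insert_of_notMem hEℬ, card_powersetCard, card_erase_of_mem (mem_univ _),
          card_univ, Fintype.card_fin, Nat.add_sub_cancel]
        exact Nat.lt_succ_self _
    _ ≤ #(∂^[i] (insert D ℬ)) := card_le_card hshadow
    _ ≤ #(∂^[i] 𝒜) := by
      refine iterated_kk h𝒜 ?_ hinit
      rw [card_insert_of_notMem hDℬ, card_powersetCard, card_erase_of_mem (mem_univ _),
        card_univ, Fintype.card_fin, Nat.add_sub_cancel]
      exact hcard

lemma choose_lt_card_upShadow_iterate {𝒜 : Finset (Finset (Fin (m + 1)))} (ha : 1 ≤ a)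
    (hab : a ≤ b) (hbm : b ≤ m) (h𝒜 : (𝒜 : Set (Finset (Fin (m + 1)))).Sized a)
    (hcard : m.choose (a - 1) < #𝒜) :
    m.choose (b - 1) < #(∂⁺^[b - a] 𝒜) := by
  have hcompl : (∂⁺^[b - a] 𝒜)ᶜˢ = ∂^[b - a] 𝒜ᶜˢ :=
    (Function.Semiconj.iterate_right (f := (·ᶜˢ)) (fun 𝒜 => (shadow_compls (𝒜 := 𝒜)).symm) _ 𝒜)
  have hsized : (𝒜ᶜˢ : Set (Finset (Fin (m + 1)))).Sized (m + 1 - a) := by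
    simpa using h𝒜.compls
  have h := choose_lt_card_shadow_iterate (i := b - a) (by omega) (by omega) hsized (by
    rwa [card_compls, Nat.choose_symm_of_eq_add (show m = m + 1 - a + (a - 1) by omega)])
  rwa [← hcompl, card_compls, show m + 1 - a - (b - a) = m - (b - 1) by omega,
    Nat.choose_symm (by omega)] at h

lemma card_le_choose_of_upward_closed {α : Type*} [LinearOrder α] {g : Finset α}
    (hg : #g = m + 1) (ha : 1 ≤ a) (hab : a ≤ b) (hbm : b ≤ m) {ℋ 𝒰 : Finset (Finset α)}
    (hℋ : ∀ T ∈ ℋ, T ⊆ g ∧ #T = a)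
    (h𝒰 : ∀ X ⊆ g, #X = b → (∃ T ∈ ℋ, T ⊆ X) → X ∈ 𝒰) (h𝒰card : #𝒰 ≤ m.choose (b - 1)) :
    #ℋ ≤ m.choose (a - 1) := by
  set e := (g.orderEmbOfFin hg).toEmbedding
  have hg' : univ.map e = g := map_orderEmbOfFin_univ g hg
  set ℋ' : Finset (Finset (Fin (m + 1))) := {T | T.map e ∈ ℋ}
  set 𝒰' : Finset (Finset (Fin (m + 1))) := {X | X.map e ∈ 𝒰}
  have hℋ' : #ℋ ≤ #ℋ' := by
    refine card_le_card_of_surjOn (·.map e) fun T hT => ?_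
    obtain ⟨u, -, rfl⟩ := subset_map_iff.1 (hg' ▸ (hℋ T hT).1)
    exact ⟨u, mem_filter.2 ⟨mem_univ u, hT⟩, rfl⟩
  have h𝒰' : #𝒰' ≤ #𝒰 :=
    card_le_card_of_injOn (·.map e) (fun X hX => (mem_filter.1 hX).2) (map_injective e).injOn
  have hsized : (ℋ' : Set (Finset (Fin (m + 1)))).Sized a := fun T hT => by
    rw [← card_map e]
    exact (hℋ _ (mem_filter.1 hT).2).2
  have hup : ∂⁺^[b - a] ℋ' ⊆ 𝒰' := by
    intro X hX
    obtain ⟨T, hT, hTX, hXcard⟩ := mem_upShadow_iterate_iff_exists_mem_card_add.1 hX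
    refine mem_filter.2 ⟨mem_univ X, h𝒰 _ (hg' ▸ map_subset_map.2 (subset_univ X)) ?_
      ⟨T.map e, (mem_filter.1 hT).2, map_subset_map.2 hTX⟩⟩
    rw [card_map, hXcard, hsized hT]
    omega
  by_contra h
  have := choose_lt_card_upShadow_iterate ha hab hbm hsized (by omega)
  have := card_le_card hup
  omega

end KruskalKatona

section HuangZhao

def HuangZhaoBound : Prop :=
  ∀ n k : ℕ, ∀ F : Finset (Finset ℕ), 2 * k < n →
    (∀ A ∈ F, A ⊆ Icc 1 n) → (∀ A ∈ F, A.card = k) → IntersectingFam F →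
    ∃ i ∈ Icc 1 n, deg F i ≤ Nat.choose (n - 2) (k - 2)

lemma IntersectingFam.image {F : Finset (Finset ℕ)} (hF : IntersectingFam F) (f : ℕ → ℕ) :
    IntersectingFam (F.image (image f)) := by
  simp only [IntersectingFam, forall_mem_image]
  intro A hA B hB
  obtain ⟨x, hx⟩ := hF A hA B hB
  exact ⟨f x, mem_inter.2 ⟨mem_image_of_mem f (mem_inter.1 hx).1,
    mem_image_of_mem f (mem_inter.1 hx).2⟩⟩

lemma deg_le_deg_image {f : ℕ → ℕ} {B : Finset ℕ} (hf : Set.InjOn f B) {F : Finset (Finset ℕ)}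
    (hFB : ∀ A ∈ F, A ⊆ B) (x : ℕ) : deg F x ≤ deg (F.image (image f)) (f x) := by
  refine card_le_card_of_injOn (image f) (fun A hA => ?_) fun A hA A' hA' h =>
    image_injOn_powerset_of_injOn hf (mem_powerset.2 (hFB A (mem_filter.1 hA).1))
      (mem_powerset.2 (hFB A' (mem_filter.1 hA').1)) h
  obtain ⟨hA, hxA⟩ := mem_filter.1 hA
  exact mem_filter.2 ⟨mem_image_of_mem _ hA, mem_image_of_mem f hxA⟩

/-- Relabelling `B` by ranks reduces to the Huang–Zhao bound on `[2k + 1]`. -/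
lemma HuangZhaoBound.exists_mem_deg_le_of_forall_subset (HZ : HuangZhaoBound) {k : ℕ} {B : Finset ℕ}
    (hB : #B = 2 * k + 1) {𝒮 : Finset (Finset ℕ)} (h𝒮B : ∀ S ∈ 𝒮, S ⊆ B)
    (hunif : ∀ S ∈ 𝒮, #S = k) (hint : IntersectingFam 𝒮) :
    ∃ j ∈ B, deg 𝒮 j ≤ (2 * k - 1).choose (k - 2) := by
  set rank : ℕ → ℕ := fun x => #{y ∈ B | y ≤ x}
  have hrank : StrictMonoOn rank B := fun x hx y hy hxy =>
    card_lt_card ((ssubset_iff_of_subset (monotone_filter_right _ fun _ _ h => h.trans hxy.le)).2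
      ⟨y, mem_filter.2 ⟨hy, le_rfl⟩, fun h => hxy.not_ge (mem_filter.1 h).2⟩)
  have himage : B.image rank = Icc 1 (2 * k + 1) := by
    refine eq_of_subset_of_card_le (fun w hw => ?_) ?_
    · obtain ⟨x, hx, rfl⟩ := mem_image.1 hw
      exact mem_Icc.2 ⟨card_pos.2 ⟨x, mem_filter.2 ⟨hx, le_rfl⟩⟩,
        hB ▸ card_le_card (filter_subset _ _)⟩
    · rw [card_image_of_injOn hrank.injOn, Nat.card_Icc, hB, Nat.add_sub_cancel]
  obtain ⟨w, hw, hdeg⟩ := HZ (2 * k + 1) k (𝒮.image (image rank)) (by omega)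
    (forall_mem_image.2 fun S hS => himage ▸ image_subset_image (h𝒮B S hS))
    (forall_mem_image.2 fun S hS => (card_image_of_injOn (hrank.injOn.mono (h𝒮B S hS))).trans
      (hunif S hS))
    (hint.image rank)
  obtain ⟨j, hj, rfl⟩ := mem_image.1 (himage ▸ hw)
  exact ⟨j, hj, (deg_le_deg_image hrank.injOn h𝒮B j).trans (by simpa using hdeg)⟩

end HuangZhao

lemma sum_Icc_choose_mul_choose (p q : ℕ) {k : ℕ} (hk : 2 ≤ k) :
    ∑ s ∈ Icc 2 k, p.choose (s - 2) * q.choose (k - s) = (p + q).choose (k - 2) := by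
  rw [Nat.add_choose_eq, Nat.sum_antidiagonal_eq_sum_range_succ_mk, ← Ico_add_one_right_eq_Icc,
    sum_Ico_eq_sum_range, show k + 1 - 2 = k - 2 + 1 by omega]
  refine sum_congr rfl fun t _ => ?_
  rw [show 2 + t - 2 = t by omega, show k - (2 + t) = k - 2 - t by omega]

/-- A member of a `k`-uniform family on `X` is determined by its trace `T` on `B` together with
a `(k - #T)`-subset of `X \ B`. -/
lemma card_filter_inter_eq_le {G : Finset (Finset ℕ)} {X B : Finset ℕ} {k : ℕ} (hB : B ⊆ X)
    (hGX : ∀ A ∈ G, A ⊆ X) (hunif : ∀ A ∈ G, #A = k) (T : Finset ℕ) :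
    #{A ∈ G | A ∩ B = T} ≤ (#X - #B).choose (k - #T) := by
  rw [← card_sdiff_of_subset hB, ← card_powersetCard]
  refine card_le_card_of_injOn (· \ B) (fun A hA => ?_) fun A hA A' hA' h => ?_
  · obtain ⟨hAG, rfl⟩ := mem_filter.1 hA
    refine mem_powersetCard.2 ⟨sdiff_subset_sdiff (hGX A hAG) subset_rfl, ?_⟩
    have := card_inter_add_card_sdiff A B
    rw [hunif A hAG] at this
    show #(A \ B) = k - #(A ∩ B)
    omega
  · obtain ⟨-, hAT⟩ := mem_filter.1 hA
    obtain ⟨-, hA'T⟩ := mem_filter.1 hA'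
    rw [← sdiff_union_inter A B, ← sdiff_union_inter A' B, hAT, hA'T]
    exact congrArg (· ∪ T) h

section ShiftedDegree

variable {G : Finset (Finset ℕ)} {B : Finset ℕ} {k j : ℕ}

def traces (G : Finset (Finset ℕ)) (B : Finset ℕ) (j : ℕ) : Finset (Finset ℕ) :=
  {A ∈ G | j ∈ A}.image (· ∩ B)

lemma mem_traces {T : Finset ℕ} : T ∈ traces G B j ↔ ∃ A ∈ G, j ∈ A ∧ A ∩ B = T := by
  simp [traces, and_assoc]

variable (hunif : ∀ A ∈ G, #A = k) (hcl : ShiftClosedInto B G) (hB : #B = 2 * k + 1)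
  (hj : j ∈ B) (hdeg : deg {S ∈ G | S ⊆ B} j ≤ (2 * k - 1).choose (k - 2))
include hunif hcl hB hj hdeg

lemma two_le_card_of_mem_traces (hk : 2 ≤ k) {T : Finset ℕ} (hT : T ∈ traces G B j) :
    2 ≤ #T := by
  obtain ⟨A, hA, hjA, rfl⟩ := mem_traces.1 hT
  have hjT : j ∈ A ∩ B := mem_inter.2 ⟨hjA, hj⟩
  by_contra! hlt
  have hT : A ∩ B = {j} :=
    eq_singleton_iff_unique_mem.2 ⟨hjT, fun x hx => card_le_one.1 (by omega) x hx j hjT⟩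
  -- then every `k`-subset of `B` through `j` lies in `G`, which is too many
  have hall : #(powersetCard (k - 1) (B.erase j)) ≤ deg {S ∈ G | S ⊆ B} j := by
    refine card_le_card_of_injOn (insert j) (fun Y hY => ?_) fun Y hY Y' hY' h => ?_
    · obtain ⟨hYB, hYcard⟩ := mem_powersetCard.1 hY
      have hjY : j ∉ Y := fun h => (mem_erase.1 (hYB h)).1 rfl
      have hYB' : insert j Y ⊆ B := insert_subset hj (hYB.trans (erase_subset _ _))
      refine mem_filter.2 ⟨mem_filter.2 ⟨hcl.mem_of_inter_subset hunif hA ?_ hYB' ?_, hYB'⟩,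
        mem_insert_self _ _⟩
      · rw [hT]
        exact singleton_subset_iff.2 (mem_insert_self _ _)
      · rw [card_insert_of_notMem hjY, hYcard]
        omega
    · have hjY : j ∉ Y := fun h => (mem_erase.1 ((mem_powersetCard.1 hY).1 h)).1 rfl
      have hjY' : j ∉ Y' := fun h => (mem_erase.1 ((mem_powersetCard.1 hY').1 h)).1 rfl
      rw [← erase_insert hjY, ← erase_insert hjY']
      exact congrArg (·.erase j) h
  have hpascal := Nat.choose_succ_succ' (2 * k - 1) (k - 2)
  rw [show 2 * k - 1 + 1 = 2 * k by omega, show k - 2 + 1 = k - 1 by omega] at hpascal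
  rw [card_powersetCard, card_erase_of_mem hj, hB, Nat.add_sub_cancel, hpascal] at hall
  have := Nat.choose_pos (show k - 1 ≤ 2 * k - 1 by omega)
  omega

/-- Kruskal–Katona, applied to the traces with `j` removed, as subsets of `B.erase j`. -/
lemma card_traces_filter_card_le {s : ℕ} (hs : 2 ≤ s) (hsk : s ≤ k) :
    #{T ∈ traces G B j | #T = s} ≤ (2 * k - 1).choose (s - 2) := by
  rw [← card_image_of_injOn ((erase_injOn' j).mono fun T hT => ?_)]
  swap
  · obtain ⟨A, -, hjA, rfl⟩ := mem_traces.1 (mem_filter.1 hT).1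
    exact mem_inter.2 ⟨hjA, hj⟩
  refine card_le_choose_of_upward_closed (g := B.erase j) (m := 2 * k - 1) (a := s - 1) (b := k - 1)
    (𝒰 := {S ∈ {S ∈ G | S ⊆ B} | j ∈ S}.image (·.erase j))
    (by rw [card_erase_of_mem hj, hB]; omega) (by omega) (by omega) (by omega) ?_ ?_
    (card_image_le.trans (by rw [show k - 1 - 1 = k - 2 by omega]; exact hdeg))
  · intro T' hT'
    obtain ⟨T, hT, rfl⟩ := mem_image.1 hT'
    obtain ⟨hTtr, rfl⟩ := mem_filter.1 hT
    obtain ⟨A, -, hjA, rfl⟩ := mem_traces.1 hTtr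
    exact ⟨erase_subset_erase j inter_subset_right,
      card_erase_of_mem (mem_inter.2 ⟨hjA, hj⟩)⟩
  · intro Y hYB hYcard ⟨T', hT', hT'Y⟩
    obtain ⟨T, hT, rfl⟩ := mem_image.1 hT'
    obtain ⟨A, hA, hjA, rfl⟩ := mem_traces.1 (mem_filter.1 hT).1
    have hjY : j ∉ Y := fun h => (mem_erase.1 (hYB h)).1 rfl
    have hYB' : insert j Y ⊆ B := insert_subset hj (hYB.trans (erase_subset _ _))
    have hS : insert j Y ∈ G := by
      refine hcl.mem_of_inter_subset hunif hA ?_ hYB' ?_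
      · rw [← insert_erase (mem_inter.2 ⟨hjA, hj⟩)]
        exact insert_subset_insert j hT'Y
      · rw [card_insert_of_notMem hjY, hYcard]
        omega
    exact mem_image.2 ⟨insert j Y, mem_filter.2 ⟨mem_filter.2 ⟨hS, hYB'⟩, mem_insert_self _ _⟩,
      erase_insert hjY⟩

lemma deg_le_choose_of_shiftClosedInto (hk : 2 ≤ k) {X : Finset ℕ} (hBX : B ⊆ X)
    (hGX : ∀ A ∈ G, A ⊆ X) : deg G j ≤ (#X - 2).choose (k - 2) := by
  set N := #X - #B
  have hsizes : ∀ T ∈ traces G B j, #T ∈ Icc 2 k := fun T hT => by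
    refine mem_Icc.2 ⟨two_le_card_of_mem_traces hunif hcl hB hj hdeg hk hT, ?_⟩
    obtain ⟨A, hA, -, rfl⟩ := mem_traces.1 hT
    exact hunif A hA ▸ card_le_card inter_subset_left
  have hX : 2 * k + 1 ≤ #X := hB ▸ card_le_card hBX
  calc deg G j = ∑ T ∈ traces G B j, #{A ∈ {A ∈ G | j ∈ A} | A ∩ B = T} :=
        card_eq_sum_card_image _ _
    _ ≤ ∑ T ∈ traces G B j, N.choose (k - #T) := sum_le_sum fun T _ =>
        card_filter_inter_eq_le hBX (fun A hA => hGX A (mem_filter.1 hA).1)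
          (fun A hA => hunif A (mem_filter.1 hA).1) T
    _ = ∑ s ∈ Icc 2 k, ∑ T ∈ traces G B j with #T = s, N.choose (k - #T) :=
        (sum_fiberwise_of_maps_to hsizes _).symm
    _ = ∑ s ∈ Icc 2 k, #{T ∈ traces G B j | #T = s} * N.choose (k - s) := by
        refine sum_congr rfl fun s _ => ?_
        rw [sum_congr rfl fun T hT => by rw [(mem_filter.1 hT).2], sum_const, smul_eq_mul]
    _ ≤ ∑ s ∈ Icc 2 k, (2 * k - 1).choose (s - 2) * N.choose (k - s) := sum_le_sum fun s hs =>
        Nat.mul_le_mul_right _ (card_traces_filter_card_le hunif hcl hB hj hdeg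
          (mem_Icc.1 hs).1 (mem_Icc.1 hs).2)
    _ = (#X - 2).choose (k - 2) := by
        rw [sum_Icc_choose_mul_choose _ _ hk]
        congr 1
        omega

end ShiftedDegree

lemma deg_le_one {F : Finset (Finset ℕ)} (hF : ∀ A ∈ F, #A ≤ 1) (i : ℕ) : deg F i ≤ 1 :=
  card_le_one.2 fun A hA A' hA' => by
    obtain ⟨hA, hiA⟩ := mem_filter.1 hA
    obtain ⟨hA', hiA'⟩ := mem_filter.1 hA'
    rw [eq_singleton_iff_unique_mem.2 ⟨hiA, fun x hx => card_le_one.1 (hF A hA) x hx i hiA⟩,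
      eq_singleton_iff_unique_mem.2 ⟨hiA', fun x hx => card_le_one.1 (hF A' hA') x hx i hiA'⟩]

theorem HuangZhaoBound.exists_mem_deg_le_choose (HZ : HuangZhaoBound) {n k : ℕ}
    {F : Finset (Finset ℕ)} (hF : ∀ A ∈ F, A ⊆ Icc 1 n) (hunif : ∀ A ∈ F, #A = k)
    (hint : IntersectingFam F) {B : Finset ℕ} (hBn : B ⊆ Icc 1 n) (hB : #B = 2 * k + 1) :
    ∃ j ∈ B, deg F j ≤ (n - 2).choose (k - 2) := by
  rcases lt_or_ge k 2 with hk | hk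
  · obtain ⟨j, hj⟩ := card_pos.1 (show 0 < #B by omega)
    refine ⟨j, hj, ?_⟩
    rw [show k - 2 = 0 by omega, Nat.choose_zero_right]
    exact deg_le_one (fun A hA => (hunif A hA).trans_le (by omega)) j
  obtain ⟨G, hGn, hGunif, hGint, hGdeg, hGcl⟩ := exists_shiftClosedInto hBn hF hunif hint
  obtain ⟨j, hj, hdeg⟩ := HZ.exists_mem_deg_le_of_forall_subset hB (𝒮 := {S ∈ G | S ⊆ B})
    (fun S hS => (mem_filter.1 hS).2) (fun S hS => hGunif S (mem_filter.1 hS).1)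
    (fun S hS S' hS' => hGint S (mem_filter.1 hS).1 S' (mem_filter.1 hS').1)
  refine ⟨j, hj, (hGdeg j hj).trans ?_⟩
  simpa using deg_le_choose_of_shiftClosedInto hGunif hGcl hB hj hdeg hk hBn hGn

lemma card_filter_not_le_of_forall_exists {α : Type*} {s : Finset α} {p : α → Prop}
    [DecidablePred p] {m : ℕ} (h : ∀ B ⊆ s, #B = m + 1 → ∃ x ∈ B, p x) :
    #{x ∈ s | ¬p x} ≤ m := by
  by_contra! hlt
  obtain ⟨B, hB, hBcard⟩ := exists_subset_card_eq (show m + 1 ≤ #{x ∈ s | ¬p x} from hlt)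
  obtain ⟨x, hx, hpx⟩ := h B (hB.trans (filter_subset _ _)) hBcard
  exact (mem_filter.1 (hB hx)).2 hpx

theorem stmt8_general
    (HZ : ∀ n k : ℕ, ∀ F : Finset (Finset ℕ), 2 * k < n →
      (∀ A ∈ F, A ⊆ Icc 1 n) → (∀ A ∈ F, A.card = k) → IntersectingFam F →
      ∃ i ∈ Icc 1 n, deg F i ≤ Nat.choose (n - 2) (k - 2))
    (n k : ℕ)
    (F : Finset (Finset ℕ)) (hF : ∀ A ∈ F, A ⊆ Icc 1 n)
    (hunif : ∀ A ∈ F, A.card = k) (hint : IntersectingFam F) :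
    n - 2 * k ≤
      ((Icc 1 n).filter (fun i => deg F i ≤ Nat.choose (n - 2) (k - 2))).card := by
  have hbad := card_filter_not_le_of_forall_exists (s := Icc 1 n) (m := 2 * k)
    fun B hBn hB => HuangZhaoBound.exists_mem_deg_le_choose HZ hF hunif hint hBn hB
  have hsplit := card_filter_add_card_filter_not (s := Icc 1 n)
    (fun i => deg F i ≤ (n - 2).choose (k - 2))
  rw [Nat.card_Icc] at hsplit
  omega

theorem stmt8
    (HZ : ∀ n k : ℕ, ∀ F : Finset (Finset ℕ), 2 * k < n →
      (∀ A ∈ F, A ⊆ Icc 1 n) → (∀ A ∈ F, A.card = k) → IntersectingFam F →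
      ∃ i ∈ Icc 1 n, deg F i ≤ Nat.choose (n - 2) (k - 2))
    (n k : ℕ) (hn : 2 * k + 1 ≤ n)
    (F : Finset (Finset ℕ)) (hF : ∀ A ∈ F, A ⊆ Icc 1 n)
    (hunif : ∀ A ∈ F, A.card = k) (hint : IntersectingFam F) :
    n - 2 * k ≤
      ((Icc 1 n).filter (fun i => deg F i ≤ Nat.choose (n - 2) (k - 2))).card :=
  stmt8_general HZ n k F hF hunif hint
end

section
/- Let \(a, b, t, n\) be positive integers with \(n > 3\max\{a,b\}\), and let \(\mathcal{A} \subseteq \binom{[n]}{a}\) and \(\mathcal{B} \subseteq \binom{[n]}{b}\) be nonempty t-cross-intersecting families. Then \(|\mathcal{A}| \le 2^b \binom{n-b}{a-t}\) and \(|\mathcal{B}| \le 2^a \binom{n-a}{b-t}\). -/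
/-!
Fix a member `B` of `ℬ`. Every `A ∈ 𝒜` is determined by its trace `A ∩ B`, a subset of `B` of
size at least `t`, together with `A \ B`, an `(a - |A ∩ B|)`-subset of the `n - b` points outside
`B`. There are `2 ^ b` traces, and since `a - t ≤ (n - b) / 2` each contributes at most
`(n - b).choose (a - t)` sets. The bound for `ℬ` is symmetric.
-/

open Finset

/-- Two families are t-cross-intersecting. -/
def TCrossIntersecting (t : ℕ) (F₁ F₂ : Finset (Finset ℕ)) : Prop :=
  ∀ A ∈ F₁, ∀ B ∈ F₂, t ≤ (A ∩ B).card

theorem Nat.choose_le_choose_right_of_two_mul_le {m k l : ℕ} (hkl : k ≤ l) (hl : 2 * l ≤ m) :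
    m.choose k ≤ m.choose l := by
  induction l, hkl using Nat.le_induction with
  | base => rfl
  | succ l hkl ih =>
    exact (ih (by omega)).trans (Nat.choose_le_succ_of_lt_half_left (by omega))

section Trace

variable {α : Type*} [DecidableEq α] {X C : Finset α} {F : Finset (Finset α)} {u t : ℕ}

theorem card_filter_inter_eq_le_s9 (hC : C ⊆ X) (hF : ∀ A ∈ F, A ⊆ X) (hFu : ∀ A ∈ F, #A = u)
    (S : Finset α) : #{A ∈ F | A ∩ C = S} ≤ (#X - #C).choose (u - #S) := by
  calc #{A ∈ F | A ∩ C = S}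
      ≤ #((X \ C).powersetCard (u - #S)) := by
        refine card_le_card_of_injOn (· \ C) (fun A hA => ?_) (fun A hA A' hA' hAA' => ?_)
        · simp only [mem_coe, mem_filter] at hA ⊢
          have hsplit := card_inter_add_card_sdiff A C
          rw [hA.2, hFu A hA.1] at hsplit
          exact mem_powersetCard.2 ⟨sdiff_subset_sdiff (hF A hA.1) le_rfl, by omega⟩
        · simp only [mem_coe, mem_filter] at hA hA'
          rw [← sdiff_union_inter A C, ← sdiff_union_inter A' C, hA.2, hA'.2]
          exact congrArg (· ∪ S) hAA'
    _ = (#X - #C).choose (u - #S) := by rw [card_powersetCard, card_sdiff_of_subset hC]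

theorem card_le_two_pow_mul_choose_of_le_card_inter (hC : C ⊆ X) (hF : ∀ A ∈ F, A ⊆ X)
    (hFu : ∀ A ∈ F, #A = u) (hFC : ∀ A ∈ F, t ≤ #(A ∩ C)) (hhalf : 2 * (u - t) ≤ #X - #C) :
    #F ≤ 2 ^ #C * (#X - #C).choose (u - t) := by
  have hfiber (S : Finset α) : #{A ∈ F | A ∩ C = S} ≤ (#X - #C).choose (u - t) := by
    obtain hempty | ⟨A, hA⟩ := {A ∈ F | A ∩ C = S}.eq_empty_or_nonempty
    · simp [hempty]
    obtain ⟨hAF, rfl⟩ := mem_filter.1 hA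
    exact (card_filter_inter_eq_le_s9 hC hF hFu _).trans
      (Nat.choose_le_choose_right_of_two_mul_le (Nat.sub_le_sub_left (hFC A hAF) u) hhalf)
  calc #F = ∑ S ∈ C.powerset, #{A ∈ F | A ∩ C = S} :=
        card_eq_sum_card_fiberwise fun A _ => mem_powerset.2 inter_subset_right
    _ ≤ ∑ _S ∈ C.powerset, (#X - #C).choose (u - t) := sum_le_sum fun S _ => hfiber S
    _ = 2 ^ #C * (#X - #C).choose (u - t) := by rw [sum_const, card_powerset, smul_eq_mul]

end Trace

namespace TCrossIntersecting

variable {t : ℕ} {𝒜 ℬ : Finset (Finset ℕ)}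

theorem symm (h : TCrossIntersecting t 𝒜 ℬ) : TCrossIntersecting t ℬ 𝒜 :=
  fun B hB A hA => inter_comm A B ▸ h A hA B hB

theorem card_le_of_mem_right {n a b : ℕ} {B : Finset ℕ} (h : TCrossIntersecting t 𝒜 ℬ)
    (h𝒜 : ∀ A ∈ 𝒜, A ⊆ Icc 1 n) (h𝒜u : ∀ A ∈ 𝒜, #A = a) (hB : B ∈ ℬ) (hBn : B ⊆ Icc 1 n)
    (hBb : #B = b) (hhalf : 2 * (a - t) ≤ n - b) :
    #𝒜 ≤ 2 ^ b * (n - b).choose (a - t) := by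
  have hgr : #(Icc 1 n) = n := by simp
  subst hBb
  simpa only [hgr] using card_le_two_pow_mul_choose_of_le_card_inter hBn h𝒜 h𝒜u
    (fun A hA => h A hA B hB) (by rwa [hgr])

end TCrossIntersecting

theorem stmt9_general (n a b t : ℕ)
    (hn : 3 * max a b < n)
    (𝒜 ℬ : Finset (Finset ℕ))
    (h𝒜 : ∀ A ∈ 𝒜, A ⊆ Icc 1 n) (h𝒜u : ∀ A ∈ 𝒜, A.card = a) (h𝒜ne : 𝒜.Nonempty)
    (hℬ : ∀ B ∈ ℬ, B ⊆ Icc 1 n) (hℬu : ∀ B ∈ ℬ, B.card = b) (hℬne : ℬ.Nonempty)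
    (hcross : TCrossIntersecting t 𝒜 ℬ) :
    𝒜.card ≤ 2 ^ b * Nat.choose (n - b) (a - t) ∧
    ℬ.card ≤ 2 ^ a * Nat.choose (n - a) (b - t) := by
  obtain ⟨A, hA⟩ := h𝒜ne
  obtain ⟨B, hB⟩ := hℬne
  exact ⟨hcross.card_le_of_mem_right h𝒜 h𝒜u hB (hℬ B hB) (hℬu B hB) (by omega),
    hcross.symm.card_le_of_mem_right hℬ hℬu hA (h𝒜 A hA) (h𝒜u A hA) (by omega)⟩

theorem stmt9 (n a b t : ℕ) (ha : 0 < a) (hb : 0 < b) (ht : 0 < t) (hn0 : 0 < n)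
    (hn : 3 * max a b < n)
    (𝒜 ℬ : Finset (Finset ℕ))
    (h𝒜 : ∀ A ∈ 𝒜, A ⊆ Icc 1 n) (h𝒜u : ∀ A ∈ 𝒜, A.card = a) (h𝒜ne : 𝒜.Nonempty)
    (hℬ : ∀ B ∈ ℬ, B ⊆ Icc 1 n) (hℬu : ∀ B ∈ ℬ, B.card = b) (hℬne : ℬ.Nonempty)
    (hcross : TCrossIntersecting t 𝒜 ℬ) :
    𝒜.card ≤ 2 ^ b * Nat.choose (n - b) (a - t) ∧
    ℬ.card ≤ 2 ^ a * Nat.choose (n - a) (b - t) :=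
  stmt9_general n a b t hn 𝒜 ℬ h𝒜 h𝒜u h𝒜ne hℬ hℬu hℬne hcross
end

section
/- Let \(\mathcal{F}\) be an \(\ell\)-shifted intersecting family of k-element subsets of [n] with \(n \ge 4k + \ell\), and let \(S_1, S_2 \subseteq [\ell]\) be disjoint. Then either \(d_{S_1}(\mathcal{F}) \le 2^{k-|S_2|}\binom{n-\ell-k+|S_2|}{k-\ell+|S_2|-1}\) or \(d_{S_2}(\mathcal{F}) \le 2^{k-|S_1|}\binom{n-\ell-k+|S_1|}{k-\ell+|S_1|-1}\). -/
/-! Write `L = [ℓ]`. Shifting proves the trace-intersection lemma: while the disjoint traces of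
`A, B ∈ F` leave a point `j ∈ L` free, a common point `i ∉ L` of `A` and `B` can be traded in `A`
for `j`, which raises `|A ∩ L|` by one and lowers `|A ∩ B|` by one.

If no member of `F` has trace `S₂`, then `d_{S₂} = 0`. Otherwise fix such a `B`. A member `A`
with trace `S₁` is determined by `T = A ∩ B ⊆ B \ L` (at most `2^(k-|S₂|)` choices) together with
`A \ (L ∪ B)`, a set of size `k - |S₁| - |T| ≤ k + |S₂| - ℓ - 1` (trace-intersection lemma) in a
ground set of `n + |S₂| - ℓ - k` points. As `n ≥ 4k + ℓ` this size is at most half the ground set,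
so the binomial coefficient is largest at the bound. -/

open Finset

def dS (F : Finset (Finset ℕ)) (ℓ : ℕ) (S : Finset ℕ) : ℕ :=
  (F.filter (fun A => A ∩ Icc 1 ℓ = S)).card

lemma Nat.choose_le_choose_of_le_of_two_mul_le {n r d : ℕ} (hrd : r ≤ d) (hd : 2 * d ≤ n) :
    n.choose r ≤ n.choose d := by
  induction d, hrd using Nat.le_induction with
  | base => rfl
  | succ d _ ih => exact (ih (by omega)).trans (Nat.choose_le_succ_of_lt_half_left (by omega))

lemma Finset.card_le_choose_of_forall_inter_eq {α : Type*} [DecidableEq α]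
    {G : Finset (Finset α)} {U Y C : Finset α} {k : ℕ} (hU : ∀ A ∈ G, A ⊆ U)
    (hk : ∀ A ∈ G, #A = k) (hC : ∀ A ∈ G, A ∩ Y = C) :
    #G ≤ (#(U \ Y)).choose (k - #C) := by
  rw [← card_powersetCard]
  refine card_le_card_of_injOn (· \ Y) (fun A hA => ?_) (fun A hA A' hA' h => ?_)
  · rw [mem_coe, mem_powersetCard, card_sdiff, inter_comm, hC A hA, hk A hA]
    exact ⟨sdiff_subset_sdiff (hU A hA) le_rfl, rfl⟩
  · rw [← sdiff_union_inter A Y, ← sdiff_union_inter A' Y, hC A hA, hC A' hA']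
    exact congrArg (· ∪ C) h

namespace IsShifted

variable {ℓ n : ℕ} {F : Finset (Finset ℕ)}

lemma erase_insert_mem (hsh : IsShifted ℓ n F) (hF : ∀ A ∈ F, A ⊆ Icc 1 n) {A : Finset ℕ}
    (hA : A ∈ F) {i j : ℕ} (hi : i ∈ A) (hiL : i ∉ Icc 1 ℓ) (hj : j ∈ Icc 1 ℓ) (hjA : j ∉ A) :
    (insert j A).erase i ∈ F := by
  by_contra h
  have hmem : shiftSet F i j A ∈ shiftFam F i j := mem_image_of_mem _ hA
  rw [hsh i (hF A hA hi) j hj hiL, shiftSet, if_pos ⟨hi, hjA, h⟩] at hmem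
  exact h hmem

lemma exists_trace_succ (hsh : IsShifted ℓ n F) (hF : ∀ A ∈ F, A ⊆ Icc 1 n)
    (hint : IntersectingFam F) {A B : Finset ℕ} (hA : A ∈ F) (hB : B ∈ F)
    (hAB : Disjoint (A ∩ Icc 1 ℓ) (B ∩ Icc 1 ℓ))
    (hlt : #(A ∩ Icc 1 ℓ) + #(B ∩ Icc 1 ℓ) < ℓ) :
    ∃ A' ∈ F, Disjoint (A' ∩ Icc 1 ℓ) (B ∩ Icc 1 ℓ) ∧
      #(A' ∩ Icc 1 ℓ) = #(A ∩ Icc 1 ℓ) + 1 ∧ #(A' ∩ B) + 1 = #(A ∩ B) := by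
  obtain ⟨i, hi⟩ := hint A hA B hB
  have hiA : i ∈ A := (mem_inter.1 hi).1
  have hiL : i ∉ Icc 1 ℓ := fun hiL =>
    disjoint_left.1 hAB (mem_inter.2 ⟨hiA, hiL⟩) (mem_inter.2 ⟨(mem_inter.1 hi).2, hiL⟩)
  have hfree : #(A ∩ Icc 1 ℓ ∪ B ∩ Icc 1 ℓ) < #(Icc 1 ℓ) :=
    (card_union_le _ _).trans_lt (by simpa using hlt)
  obtain ⟨j, hjL, hjAB⟩ := exists_mem_notMem_of_card_lt_card hfree
  have hjA : j ∉ A := fun h => hjAB (mem_union_left _ (mem_inter.2 ⟨h, hjL⟩))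
  have hjB : j ∉ B := fun h => hjAB (mem_union_right _ (mem_inter.2 ⟨h, hjL⟩))
  have htrace : (insert j A).erase i ∩ Icc 1 ℓ = insert j (A ∩ Icc 1 ℓ) := by
    ext x; simp only [mem_inter, mem_erase, mem_insert]; grind
  have hinter : (insert j A).erase i ∩ B = (A ∩ B).erase i := by
    ext x; simp only [mem_inter, mem_erase, mem_insert]; grind
  refine ⟨_, erase_insert_mem hsh hF hA hiA hiL hjL hjA, ?_, ?_, ?_⟩
  · rw [htrace, disjoint_insert_left]
    exact ⟨fun h => hjB (mem_inter.1 h).1, hAB⟩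
  · rw [htrace, card_insert_of_notMem fun h => hjA (mem_inter.1 h).1]
  · rw [hinter, card_erase_add_one hi]

theorem succ_le_card_trace_add_card_inter (hsh : IsShifted ℓ n F) (hF : ∀ A ∈ F, A ⊆ Icc 1 n)
    (hint : IntersectingFam F) {A B : Finset ℕ} (hA : A ∈ F) (hB : B ∈ F)
    (hAB : Disjoint (A ∩ Icc 1 ℓ) (B ∩ Icc 1 ℓ)) :
    ℓ + 1 ≤ #(A ∩ Icc 1 ℓ) + #(B ∩ Icc 1 ℓ) + #(A ∩ B) := by
  obtain ⟨c, hc⟩ : ∃ c, #(A ∩ B) = c := ⟨_, rfl⟩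
  induction c generalizing A with
  | zero => exact absurd (card_eq_zero.1 hc) (hint A hA B hB).ne_empty
  | succ c ih =>
    by_cases hcover : ℓ ≤ #(A ∩ Icc 1 ℓ) + #(B ∩ Icc 1 ℓ)
    · omega
    obtain ⟨A', hA', hA'B, htrace, hinter⟩ :=
      exists_trace_succ hsh hF hint hA hB hAB (by omega)
    have := ih hA' hA'B (by omega)
    omega

end IsShifted

section

variable {n k ℓ : ℕ} {F : Finset (Finset ℕ)}

lemma card_filter_trace_eq_inter_eq_le (hn : 4 * k + ℓ ≤ n) (hF : ∀ A ∈ F, A ⊆ Icc 1 n)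
    (hunif : ∀ A ∈ F, #A = k) (hsh : IsShifted ℓ n F) (hint : IntersectingFam F)
    {S₁ S₂ B : Finset ℕ} (hB : B ∈ F) (hB₂ : B ∩ Icc 1 ℓ = S₂) (hdisj : Disjoint S₁ S₂)
    (T : Finset ℕ) :
    #{A ∈ F | A ∩ Icc 1 ℓ = S₁ ∧ A ∩ B = T} ≤
      (n + #S₂ - ℓ - k).choose (k + #S₂ - ℓ - 1) := by
  obtain hempty | ⟨A₀, hA₀⟩ := ({A ∈ F | A ∩ Icc 1 ℓ = S₁ ∧ A ∩ B = T}).eq_empty_or_nonempty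
  · simp [hempty]
  obtain ⟨hA₀F, hA₀₁, hA₀B⟩ := by simpa only [mem_filter] using hA₀
  have hS₁T : Disjoint S₁ T := by
    subst hA₀₁ hA₀B hB₂
    rw [disjoint_left] at hdisj ⊢
    intro x hx hx'
    exact hdisj hx (mem_inter.2 ⟨(mem_inter.1 hx').2, (mem_inter.1 hx).2⟩)
  have htrace := hsh.succ_le_card_trace_add_card_inter hF hint hA₀F hB (hA₀₁ ▸ hB₂ ▸ hdisj)
  rw [hA₀₁, hB₂, hA₀B] at htrace
  have hS₂k : #S₂ ≤ k := hunif B hB ▸ hB₂ ▸ card_le_card inter_subset_left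
  have hcard : #(Icc 1 n \ (Icc 1 ℓ ∪ B)) = n + #S₂ - ℓ - k := by
    rw [card_sdiff_of_subset (union_subset (Icc_subset_Icc le_rfl (by omega)) (hF B hB)),
      card_union, inter_comm, hB₂, hunif B hB, Nat.card_Icc, Nat.card_Icc]
    omega
  calc _ ≤ (#(Icc 1 n \ (Icc 1 ℓ ∪ B))).choose (k - #(S₁ ∪ T)) := by
        refine card_le_choose_of_forall_inter_eq (fun A hA => hF A (mem_filter.1 hA).1)
          (fun A hA => hunif A (mem_filter.1 hA).1) fun A hA => ?_
        obtain ⟨-, hA₁, hAB⟩ := mem_filter.1 hA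
        rw [inter_union_distrib_left, hA₁, hAB]
    _ ≤ _ := by
        rw [hcard, card_union_of_disjoint hS₁T]
        exact Nat.choose_le_choose_of_le_of_two_mul_le (by omega) (by omega)

lemma dS_le_of_mem (hn : 4 * k + ℓ ≤ n) (hF : ∀ A ∈ F, A ⊆ Icc 1 n)
    (hunif : ∀ A ∈ F, #A = k) (hsh : IsShifted ℓ n F) (hint : IntersectingFam F)
    {S₁ S₂ B : Finset ℕ} (hB : B ∈ F) (hB₂ : B ∩ Icc 1 ℓ = S₂) (hdisj : Disjoint S₁ S₂) :
    dS F ℓ S₁ ≤ 2 ^ (k - #S₂) * (n + #S₂ - ℓ - k).choose (k + #S₂ - ℓ - 1) := by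
  have hmaps : ∀ A ∈ {A ∈ F | A ∩ Icc 1 ℓ = S₁}, A ∩ B ∈ (B \ Icc 1 ℓ).powerset := by
    intro A hA
    rw [mem_powerset]
    intro x hx
    refine mem_sdiff.2 ⟨(mem_inter.1 hx).2, fun hxL =>
      disjoint_left.1 hdisj (show x ∈ S₁ from ?_) ?_⟩
    · exact (mem_filter.1 hA).2 ▸ mem_inter.2 ⟨(mem_inter.1 hx).1, hxL⟩
    · exact hB₂ ▸ mem_inter.2 ⟨(mem_inter.1 hx).2, hxL⟩
  have hpow : #(B \ Icc 1 ℓ).powerset = 2 ^ (k - #S₂) := by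
    rw [card_powerset, card_sdiff, inter_comm, hB₂, hunif B hB]
  rw [mul_comm, ← hpow]
  refine card_le_mul_card_image_of_maps_to hmaps _ fun T _ => ?_
  rw [filter_filter]
  exact card_filter_trace_eq_inter_eq_le hn hF hunif hsh hint hB hB₂ hdisj T

end

theorem stmt11_general (n k ℓ : ℕ) (hn : 4 * k + ℓ ≤ n)
    (F : Finset (Finset ℕ))
    (hF : ∀ A ∈ F, A ⊆ Icc 1 n) (hunif : ∀ A ∈ F, A.card = k)
    (hsh : IsShifted ℓ n F) (hint : IntersectingFam F)
    (S₁ S₂ : Finset ℕ)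
    (hdisj : Disjoint S₁ S₂) :
    dS F ℓ S₁ ≤ 2 ^ (k - S₂.card) *
        Nat.choose (n + S₂.card - ℓ - k) (k + S₂.card - ℓ - 1) ∨
    dS F ℓ S₂ ≤ 2 ^ (k - S₁.card) *
        Nat.choose (n + S₁.card - ℓ - k) (k + S₁.card - ℓ - 1) := by
  obtain hempty | ⟨B, hB⟩ := ({A ∈ F | A ∩ Icc 1 ℓ = S₂}).eq_empty_or_nonempty
  · right
    simp [dS, hempty]
  · obtain ⟨hB, hB₂⟩ := mem_filter.1 hB
    exact Or.inl (dS_le_of_mem hn hF hunif hsh hint hB hB₂ hdisj)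

theorem stmt11 (n k ℓ : ℕ) (hn : 4 * k + ℓ ≤ n)
    (F : Finset (Finset ℕ))
    (hF : ∀ A ∈ F, A ⊆ Icc 1 n) (hunif : ∀ A ∈ F, A.card = k)
    (hsh : IsShifted ℓ n F) (hint : IntersectingFam F)
    (S₁ S₂ : Finset ℕ) (hS₁ : S₁ ⊆ Icc 1 ℓ) (hS₂ : S₂ ⊆ Icc 1 ℓ)
    (hdisj : Disjoint S₁ S₂) :
    dS F ℓ S₁ ≤ 2 ^ (k - S₂.card) *
        Nat.choose (n + S₂.card - ℓ - k) (k + S₂.card - ℓ - 1) ∨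
    dS F ℓ S₂ ≤ 2 ^ (k - S₁.card) *
        Nat.choose (n + S₁.card - ℓ - k) (k + S₁.card - ℓ - 1) :=
  stmt11_general n k ℓ hn F hF hunif hsh hint S₁ S₂ hdisj
end

section
/- Let \(n, k, \ell\) be integers with \(4 \le \ell+1 \le n\) and \(k \le n\). Let \(\mathcal{F} \subseteq \binom{[n]}{k}\) be the family of all k-element sets A such that either \(1 \in A\) and \(A \cap \{2,\dots,\ell+1\} \neq \emptyset\), or \(\{2,\dots,\ell+1\} \subseteq A\). Then \(\mathcal{F}\) is intersecting, and for each \(i \in \{2,\dots,\ell+1\}\), the degree of i equals \(\binom{n-2}{k-2} + \binom{n-\ell-1}{k-\ell}\); in particular \(d_{\ell+1}(\mathcal{F}) = \binom{n-2}{k-2} + \binom{n-\ell-1}{k-\ell}\). -/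
/-!
Any two members meet in `1`, in `{2, …, ℓ + 1}`, or in a point of `A ∩ {2, …, ℓ + 1}`.
The members through `i ∈ {2, …, ℓ + 1}` are the `k`-sets containing `{1, i}` together with
the disjoint class of `k`-sets avoiding `1` and containing `{2, …, ℓ + 1}`, counted by
`(n-2 choose k-2)` and `(n-ℓ-1 choose k-ℓ)`.
-/

open Finset

def hiltonMilnerFamily {α : Type*} [DecidableEq α] (U : Finset α) (k : ℕ) (x : α)
    (T : Finset α) : Finset (Finset α) :=
  U.powerset.filter fun A => A.card = k ∧ ((x ∈ A ∧ (A ∩ T).Nonempty) ∨ T ⊆ A)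

theorem intersectingFam_hiltonMilnerFamily (U : Finset ℕ) (k x : ℕ) {T : Finset ℕ}
    (hT : T.Nonempty) : IntersectingFam (hiltonMilnerFamily U k x T) := by
  intro A hA B hB
  simp only [hiltonMilnerFamily, mem_filter] at hA hB
  obtain ⟨t, ht⟩ := hT
  rcases hA.2.2 with ⟨hxA, y, hyA⟩ | hTA <;> rcases hB.2.2 with ⟨hxB, z, hzB⟩ | hTB
  · exact ⟨x, mem_inter.2 ⟨hxA, hxB⟩⟩
  · exact ⟨y, mem_inter.2 ⟨(mem_inter.1 hyA).1, hTB (mem_inter.1 hyA).2⟩⟩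
  · exact ⟨z, mem_inter.2 ⟨hTA (mem_inter.1 hzB).2, (mem_inter.1 hzB).1⟩⟩
  · exact ⟨t, mem_inter.2 ⟨hTA ht, hTB ht⟩⟩

section Degree

variable {α : Type*} [DecidableEq α] {U T : Finset α} {k : ℕ} {x i : α}

theorem filter_mem_hiltonMilnerFamily (hi : i ∈ T) :
    (hiltonMilnerFamily U k x T).filter (i ∈ ·) =
      (U.powersetCard k).filter ({x, i} ⊆ ·) ∪ ((U.erase x).powersetCard k).filter (T ⊆ ·) := by
  ext A
  simp only [hiltonMilnerFamily, mem_filter, mem_union, mem_powerset, mem_powersetCard,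
    subset_erase, insert_subset_iff, singleton_subset_iff]
  by_cases hxA : x ∈ A
  · have : i ∈ A → (A ∩ T).Nonempty := fun hiA => ⟨i, mem_inter.2 ⟨hiA, hi⟩⟩
    tauto
  · tauto

theorem card_filter_mem_hiltonMilnerFamily (hxU : x ∈ U) (hTU : T ⊆ U) (hxT : x ∉ T)
    (hi : i ∈ T) (hk : T.card ≤ k) (hk₂ : 2 ≤ k) :
    ((hiltonMilnerFamily U k x T).filter (i ∈ ·)).card =
      (U.card - 2).choose (k - 2) + (U.card - 1 - T.card).choose (k - T.card) := by
  have hxi : ({x, i} : Finset α).card = 2 := card_pair (ne_of_mem_of_not_mem hi hxT).symm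
  have hdisj : Disjoint ((U.powersetCard k).filter ({x, i} ⊆ ·))
      (((U.erase x).powersetCard k).filter (T ⊆ ·)) := by
    refine disjoint_left.2 fun A hA hA' => ?_
    have hxA : x ∈ A := (mem_filter.1 hA).2 (mem_insert_self x {i})
    exact notMem_erase x U ((mem_powersetCard.1 (mem_filter.1 hA').1).1 hxA)
  rw [filter_mem_hiltonMilnerFamily hi, card_union_of_disjoint hdisj,
    card_filter_powersetCard_subset _ _ _ (insert_subset hxU (singleton_subset_iff.2 (hTU hi)))
      (hxi ▸ hk₂),
    card_filter_powersetCard_subset _ _ _ (subset_erase.2 ⟨hTU, hxT⟩) hk, hxi, card_erase_of_mem hxU]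

end Degree

theorem stmt16_general (n k ℓ : ℕ) (hℓ : 4 ≤ ℓ + 1) (hℓn : ℓ + 1 ≤ n) (hℓk : ℓ ≤ k)
    (F : Finset (Finset ℕ))
    (hF : F = (Icc 1 n).powerset.filter (fun A => A.card = k ∧
      ((1 ∈ A ∧ (A ∩ Icc 2 (ℓ + 1)).Nonempty) ∨ Icc 2 (ℓ + 1) ⊆ A))) :
    IntersectingFam F ∧
    ∀ i ∈ Icc 2 (ℓ + 1),
      deg F i = Nat.choose (n - 2) (k - 2) + Nat.choose (n - ℓ - 1) (k - ℓ) := by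
  change F = hiltonMilnerFamily (Icc 1 n) k 1 (Icc 2 (ℓ + 1)) at hF
  subst hF
  have hT : (Icc 2 (ℓ + 1)).card = ℓ := by simp
  refine ⟨intersectingFam_hiltonMilnerFamily _ _ _ (nonempty_Icc.2 (by omega)), fun i hi => ?_⟩
  rw [deg, card_filter_mem_hiltonMilnerFamily (mem_Icc.2 ⟨le_rfl, by omega⟩) (Icc_subset_Icc (by omega) hℓn)
    (by simp) hi (hT.symm ▸ hℓk) (by omega), hT, Nat.card_Icc, add_tsub_cancel_right,
    Nat.sub_right_comm n 1 ℓ]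

theorem stmt16 (n k ℓ : ℕ) (hℓ : 4 ≤ ℓ + 1) (hℓn : ℓ + 1 ≤ n) (hℓk : ℓ ≤ k) (hk : k ≤ n)
    (F : Finset (Finset ℕ))
    (hF : F = (Icc 1 n).powerset.filter (fun A => A.card = k ∧
      ((1 ∈ A ∧ (A ∩ Icc 2 (ℓ + 1)).Nonempty) ∨ Icc 2 (ℓ + 1) ⊆ A))) :
    IntersectingFam F ∧
    ∀ i ∈ Icc 2 (ℓ + 1),
      deg F i = Nat.choose (n - 2) (k - 2) + Nat.choose (n - ℓ - 1) (k - ℓ) :=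
  stmt16_general n k ℓ hℓ hℓn hℓk F hF
end
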